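/- arXiv:2311.03182 — 6 statements merged into one kernel-verified Lean document; each statement's English description precedes it below -/
import Mathlib

section
/- Under Lim's system hypotheses (see context), the following strict lower bound holds: tanh(h·Λ/2) < Σ_{k ∈ ZMod(2n)} 1/(1 + exp(h·ℓ'_k)). (Since ℓ' is constant on the pairs {k, ω(k)}, this sum equals twice the sum of 1/(1+exp(h·ℓ_i)) over the n pairs, so this is the lower bound in the Basmajian-type inequality for metric graphs, Theorem 2 of the paper.) -/
open Finset

/-!
Put `w k = exp (-h L k)`, `g k = exp (-h ℓ'_k) Y_k` and `q = ∏ w = exp (-h Λ)`. Equations (ii) and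
(iii) are first-order linear recurrences along the cycle, forward for `X` and backward for `X̄`.
Unrolling each once around the cycle starting at `k` gives
`(1 - q) (X_k + X̄_{k+1}) = 2 g_k + Σ_{0<j<2n} (P_j + Q_j) g_{k+j}`, where `P_j` and `Q_j` are the
products of `w` over the two arcs into which `k` and `k + j` cut the cycle. Thus `P_j Q_j = q` with
both factors `< 1`, so `P_j + Q_j < 1 + q`. Since (i) says `X_k + X̄_{k+1} = Y_{ω k} + 2 g_k`, this
yields `(1 - q) (Y_{ω k} + g_k) < (1 + q) Σ g`. Adding this for `k` and `ω k`, weighting by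
`c/(1+c)` with `c = exp (-h ℓ')`, and summing over `k` gives `(1 - q)/(1 + q) < Σ c/(1+c)`, which is
the claim because `tanh (hΛ/2) = (1 - q)/(1 + q)`.
-/

section Recurrence

variable {R : Type*} [CommSemiring R] {a b x : ℕ → R}

theorem eq_prod_mul_add_sum_of_eq_mul_add (hx : ∀ i, x i = a i * x (i + 1) + b i) (j : ℕ) :
    x 0 = (∏ i ∈ range j, a i) * x j + ∑ i ∈ range j, (∏ l ∈ range i, a l) * b i := by
  induction j with
  | zero => simp
  | succ j ih =>
    rw [ih, hx j, prod_range_succ, sum_range_succ]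
    ring

theorem eq_prod_mul_add_sum_of_succ_eq_mul_add (hx : ∀ i, x (i + 1) = a i * x i + b i)
    (j : ℕ) :
    x j = (∏ i ∈ range j, a i) * x 0 + ∑ i ∈ range j, (∏ l ∈ Ico (i + 1) j, a l) * b i := by
  induction j with
  | zero => simp
  | succ j ih =>
    have hIco : ∑ i ∈ range j, (∏ l ∈ Ico (i + 1) (j + 1), a l) * b i
        = a j * ∑ i ∈ range j, (∏ l ∈ Ico (i + 1) j, a l) * b i := by
      rw [mul_sum]
      refine sum_congr rfl fun i hi => ?_
      rw [prod_Ico_succ_top (mem_range.1 hi)]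
      ring
    rw [hx j, ih, prod_range_succ, sum_range_succ, Ico_self, prod_empty, hIco]
    ring

end Recurrence

theorem periodic_recurrence_bound {m : ℕ} (hm : 2 ≤ m) {a b x y : ℕ → ℝ}
    (ha₀ : ∀ i, 0 < a i) (ha₁ : ∀ i, a i < 1) (hb : ∀ i, 0 < b i)
    (hx : ∀ i, x i = a i * x (i + 1) + b i) (hy : ∀ i, y (i + 1) = a i * y i + b (i + 1))
    (hxm : x m = x 0) (hym : y m = y 0) (hbm : b m = b 0) :
    (1 - ∏ i ∈ range m, a i) * (x 0 + y 0 - b 0)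
      < (1 + ∏ i ∈ range m, a i) * ∑ i ∈ range m, b i := by
  set q := ∏ i ∈ range m, a i
  set P : ℕ → ℝ := fun i => ∏ l ∈ range i, a l
  set Q : ℕ → ℝ := fun i => ∏ l ∈ Ico i m, a l
  have hx0 : (1 - q) * x 0 = ∑ i ∈ range m, P i * b i := by
    have := eq_prod_mul_add_sum_of_eq_mul_add hx m
    rw [hxm] at this
    linear_combination this
  have hy0 : (1 - q) * y 0 = ∑ i ∈ range m, Q i * b i + (1 - q) * b 0 := by
    have := eq_prod_mul_add_sum_of_succ_eq_mul_add hy m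
    -- the backward sum pairs `b (i + 1)` with `Q (i + 1)`; shift back using `Q 0 = q`, `Q m = 1`
    have hshift := sum_range_succ' (fun i => Q i * b i) m
    rw [sum_range_succ] at hshift
    simp only [Q, Ico_self, prod_empty, ← range_eq_Ico] at hshift
    rw [hym] at this
    linear_combination this - hshift + hbm
  have hPQ : ∀ i ∈ range m, P i * Q i = q := fun i hi =>
    prod_range_mul_prod_Ico a (mem_range.1 hi).le
  have hprod_le_one : ∀ s : Finset ℕ, ∏ l ∈ s, a l ≤ 1 := fun s =>
    prod_le_one (fun l _ => (ha₀ l).le) (fun l _ => (ha₁ l).le)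
  have hprod_lt_one : ∀ s : Finset ℕ, s.Nonempty → ∏ l ∈ s, a l < 1 := fun s hs => by
    simpa using prod_lt_prod_of_nonempty (fun l _ => ha₀ l) (fun l _ => ha₁ l) hs
  have hcoeff : ∀ i ∈ range m, (P i + Q i) * b i ≤ (1 + q) * b i := by
    intro i hi
    refine mul_le_mul_of_nonneg_right ?_ (hb i).le
    nlinarith [hprod_le_one (range i), hprod_le_one (Ico i m), hPQ i hi]
  have hcoeff₁ : (P 1 + Q 1) * b 1 < (1 + q) * b 1 := by
    refine mul_lt_mul_of_pos_right ?_ (hb 1)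
    have hP₁ : P 1 < 1 := hprod_lt_one _ (nonempty_range_iff.2 one_ne_zero)
    have hQ₁ : Q 1 < 1 := hprod_lt_one _ (nonempty_Ico.2 (by omega))
    nlinarith [hPQ 1 (mem_range.2 (by omega)), mul_pos (sub_pos.2 hP₁) (sub_pos.2 hQ₁)]
  calc (1 - q) * (x 0 + y 0 - b 0) = ∑ i ∈ range m, (P i + Q i) * b i := by
        simp only [add_mul, sum_add_distrib]; linear_combination hx0 + hy0
    _ < ∑ i ∈ range m, (1 + q) * b i :=
        sum_lt_sum hcoeff ⟨1, mem_range.2 (by omega), hcoeff₁⟩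
    _ = (1 + q) * ∑ i ∈ range m, b i := (mul_sum ..).symm

@[to_additive]
theorem ZMod.prod_range_add_natCast {M : Type*} [CommMonoid M] {m : ℕ} [NeZero m]
    (f : ZMod m → M) (k : ZMod m) : ∏ i ∈ range m, f (k + i) = ∏ t, f t := by
  rw [← Equiv.prod_comp (Equiv.addLeft k) f]
  refine prod_nbij' (fun i => (i : ZMod m)) ZMod.val (fun _ _ => mem_univ _)
    (fun t _ => mem_range.2 t.val_lt) (fun i hi => ZMod.val_cast_of_lt (mem_range.1 hi))
    (fun t _ => ZMod.natCast_zmod_val t) (fun _ _ => rfl)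

theorem cyclic_recurrence_bound {m : ℕ} [NeZero m] (hm : 2 ≤ m) {w g X Xb : ZMod m → ℝ}
    (hw₀ : ∀ t, 0 < w t) (hw₁ : ∀ t, w t < 1) (hg : ∀ t, 0 < g t)
    (hX : ∀ k, X k = w (k + 1) * X (k + 1) + g k)
    (hXb : ∀ k, Xb k = w (k - 1) * Xb (k - 1) + g (k - 1)) (k : ZMod m) :
    (1 - ∏ t, w t) * (X k + Xb (k + 1) - g k) < (1 + ∏ t, w t) * ∑ t, g t := by
  have := periodic_recurrence_bound hm (a := fun i => w (k + 1 + i)) (b := fun i => g (k + i))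
    (x := fun i => X (k + i)) (y := fun i => Xb (k + 1 + i)) (fun _ => hw₀ _) (fun _ => hw₁ _)
    (fun _ => hg _) (fun i => by simp only [Nat.cast_succ, hX (k + i)]; ring_nf)
    (fun i => by simp only [Nat.cast_succ, hXb (k + 1 + (i + 1))]; ring_nf)
    (by simp) (by simp) (by simp)
  simpa [ZMod.prod_range_add_natCast (fun t => w t), ZMod.sum_range_add_natCast g] using this

theorem lt_sum_div_one_add_of_involutive {ι : Type*} [Fintype ι] [Nonempty ι] {ω : ι → ι}
    (hω : Function.Involutive ω) {c Y : ι → ℝ} (hc : ∀ k, 0 < c k) (hcω : ∀ k, c (ω k) = c k)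
    (hY : ∀ k, 0 < Y k) {θ : ℝ} (hθ : ∀ k, θ * (Y (ω k) + c k * Y k) < ∑ t, c t * Y t) :
    θ < ∑ t, c t / (1 + c t) := by
  set T := ∑ t, c t * Y t
  have hT : 0 < T := sum_pos (fun t _ => mul_pos (hc t) (hY t)) univ_nonempty
  have hTω : ∑ t, c t * Y (ω t) = T :=
    Fintype.sum_bijective ω hω.bijective _ _ fun t => by rw [hcω]
  have hpair : ∀ k, c k / (1 + c k) * (θ * ((1 + c k) * (Y k + Y (ω k))))
      < c k / (1 + c k) * (2 * T) := by
    intro k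
    refine mul_lt_mul_of_pos_left ?_ (div_pos (hc k) (by linarith [hc k]))
    have := hθ (ω k)
    rw [hω, hcω] at this
    linarith [hθ k]
  have hexpand : ∀ k, c k / (1 + c k) * (θ * ((1 + c k) * (Y k + Y (ω k))))
      = θ * (c k * Y k + c k * Y (ω k)) := fun k => by
    field_simp [(by linarith [hc k] : 1 + c k ≠ 0)]
  have := sum_lt_sum_of_nonempty univ_nonempty fun k (_ : k ∈ univ) => hpair k
  simp only [hexpand, ← mul_sum, ← sum_mul, sum_add_distrib, hTω] at this
  nlinarith

theorem Real.tanh_half_eq (x : ℝ) :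
    Real.tanh (x / 2) = (1 - Real.exp (-x)) / (1 + Real.exp (-x)) := by
  rw [Real.tanh_eq, show -x = -(x/2) + -(x/2) by ring, Real.exp_add, Real.exp_neg]
  have := Real.exp_pos (x / 2)
  field_simp

theorem Real.one_div_one_add_exp (x : ℝ) :
    1 / (1 + Real.exp x) = Real.exp (-x) / (1 + Real.exp (-x)) := by
  have := Real.exp_pos x
  rw [Real.exp_neg]
  field_simp
  ring

theorem tanh_lt_sum_of_lim_system_general
    (n : ℕ) [NeZero n] (h : ℝ) (hh : 0 < h)
    (L ℓ' X Xb Y : ZMod (2 * n) → ℝ)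
    (ω : ZMod (2 * n) → ZMod (2 * n))
    (hL : ∀ k, 0 < L k)
    (hω : ∀ k, ω (ω k) = k)
    (hℓω : ∀ k, ℓ' (ω k) = ℓ' k)
    (hY : ∀ k, 0 < Y k)
    (eqY : ∀ k, Y k = Real.exp (-h * L (ω k + 1)) * X (ω k + 1)
        + Real.exp (-h * L (ω k)) * Xb (ω k))
    (eqX : ∀ k, X k = Real.exp (-h * L (k + 1)) * X (k + 1)
        + Real.exp (-h * ℓ' k) * Y k)
    (eqXb : ∀ k, Xb k = Real.exp (-h * L (k - 1)) * Xb (k - 1)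
        + Real.exp (-h * ℓ' (k - 1)) * Y (k - 1)) :
    Real.tanh (h * (∑ k, L k) / 2) < ∑ k, 1 / (1 + Real.exp (h * ℓ' k)) := by
  set c : ZMod (2 * n) → ℝ := fun t => Real.exp (-h * ℓ' t)
  set q := Real.exp (-(h * ∑ k, L k))
  have hq : ∏ t, Real.exp (-h * L t) = q := by
    simp only [q, ← Real.exp_sum, neg_mul, mul_sum, sum_neg_distrib]
  have hq₀ : 0 < q := Real.exp_pos _
  have hq₁ : q < 1 := Real.exp_lt_one_iff.2 (neg_lt_zero.2
    (mul_pos hh (sum_pos (fun k _ => hL k) univ_nonempty)))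
  have hvertex : ∀ k, (1 - q) * (Y (ω k) + c k * Y k) < (1 + q) * ∑ t, c t * Y t := by
    intro k
    have := cyclic_recurrence_bound (w := fun t => Real.exp (-h * L t)) (g := fun t => c t * Y t)
      (by have := NeZero.pos n; omega) (fun t => Real.exp_pos _)
      (fun t => Real.exp_lt_one_iff.2 (by nlinarith [hL t]))
      (fun t => mul_pos (Real.exp_pos _) (hY t)) eqX eqXb k
    have hstar : X k + Xb (k + 1) - c k * Y k = Y (ω k) + c k * Y k := by
      rw [eqX k, eqXb (k + 1), eqY (ω k), hω, add_sub_cancel_right]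
      ring
    rwa [hq, hstar] at this
  have hθ := lt_sum_div_one_add_of_involutive (ω := ω) (c := c) (θ := (1 - q) / (1 + q)) hω
    (fun t => Real.exp_pos _) (fun t => by simp only [c, hℓω]) hY fun k => by
      rw [div_mul_eq_mul_div, div_lt_iff₀ (by linarith), mul_comm _ (1 + q)]
      exact hvertex k
  simpa only [Real.tanh_half_eq, Real.one_div_one_add_exp, c, neg_mul] using hθ

/-- Lower bound in the Basmajian-type inequality for metric graphs
(Theorem 2, lower bound), stated via Lim's system of equations. -/
theorem tanh_lt_sum_of_lim_system
    (n : ℕ) [NeZero n] (hn : 1 ≤ n) (h : ℝ) (hh : 0 < h)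
    (L ℓ' X Xb Y : ZMod (2 * n) → ℝ)
    (ω : ZMod (2 * n) → ZMod (2 * n))
    (hL : ∀ k, 0 < L k)
    (hω : ∀ k, ω (ω k) = k) (hω' : ∀ k, ω k ≠ k)
    (hℓpos : ∀ k, 0 < ℓ' k) (hℓω : ∀ k, ℓ' (ω k) = ℓ' k)
    (hX : ∀ k, 0 < X k) (hXb : ∀ k, 0 < Xb k) (hY : ∀ k, 0 < Y k)
    (eqY : ∀ k, Y k = Real.exp (-h * L (ω k + 1)) * X (ω k + 1)
        + Real.exp (-h * L (ω k)) * Xb (ω k))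
    (eqX : ∀ k, X k = Real.exp (-h * L (k + 1)) * X (k + 1)
        + Real.exp (-h * ℓ' k) * Y k)
    (eqXb : ∀ k, Xb k = Real.exp (-h * L (k - 1)) * Xb (k - 1)
        + Real.exp (-h * ℓ' (k - 1)) * Y (k - 1)) :
    Real.tanh (h * (∑ k, L k) / 2) < ∑ k, 1 / (1 + Real.exp (h * ℓ' k)) :=
  tanh_lt_sum_of_lim_system_general n h hh L ℓ' X Xb Y ω hL hω hℓω hY eqY eqX eqXb
end

section
/- Under Lim's system hypotheses with the edge lengths on the circle allowed to vanish (i.e. L_k ≥ 0 for all k but with total Λ > 0; all other hypotheses unchanged), the non-strict double inequality holds: tanh(h·Λ/2) ≤ Σ_{k ∈ ZMod(2n)} 1/(1 + exp(h·ℓ'_k)) ≤ sinh(h·Λ/2). (This is the degenerate-edge extension of Theorem 2 discussed in the optimality subsection of the paper.) -/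
/-!
Write `a m = exp (-h L m)`, `b k = exp (-h ℓ' k)`, `Z k = b k Y k`, `T = ∑ Z` and
`q = ∏ a = r ^ 2` with `r = exp (-h Λ / 2)`. Unrolling the recursions for `X` (backwards) and
for `a · Xb` (forwards) once around the circle gives
`(1 - q) (X k + a k Xb k) = ∑ⱼ (πⱼ + ρⱼ) Z (k + j)`, where `πⱼ, ρⱼ ∈ [0, 1]` are the products
of `a` over the two complementary arcs, so `πⱼ ρⱼ = q` and `2 r ≤ πⱼ + ρⱼ ≤ 1 + q`. Since
`X k + a k Xb k = Y (ω k) + b k Y k`, this sandwiches every `Y (ω k) + b k Y k` between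
`2 r T / (1 - q)` and `(1 + q) T / (1 - q)`. Adding the bounds at `k` and `ω k` and weighting
by `b k / (1 + b k)` turns them into bounds on `∑ b k / (1 + b k) = ∑ 1 / (1 + exp (h ℓ' k))`,
which are `tanh (h Λ / 2)` and `sinh (h Λ / 2)`.
-/

open Finset

theorem unfold_backward_recurrence {R : Type*} [CommSemiring R] (α ζ x : ℕ → R)
    (hx : ∀ j, x j = α j * x (j + 1) + ζ j) (N : ℕ) :
    x 0 = ∑ j ∈ range N, (∏ i ∈ range j, α i) * ζ j + (∏ i ∈ range N, α i) * x N := by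
  induction N with
  | zero => simp
  | succ N ih =>
    rw [ih, hx N, sum_range_succ, prod_range_succ]
    ring

theorem unfold_forward_recurrence {R : Type*} [CommSemiring R] (α ζ w : ℕ → R)
    (hw : ∀ j, w (j + 1) = α j * (w j + ζ j)) (N : ℕ) :
    w N = (∏ i ∈ range N, α i) * w 0 + ∑ j ∈ range N, (∏ i ∈ Ico j N, α i) * ζ j := by
  induction N with
  | zero => simp
  | succ N ih =>
    have hsum : ∑ j ∈ range N, (∏ i ∈ Ico j (N + 1), α i) * ζ j
        = α N * ∑ j ∈ range N, (∏ i ∈ Ico j N, α i) * ζ j := by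
      rw [mul_sum]
      exact sum_congr rfl fun j hj => by rw [prod_Ico_succ_top (mem_range.1 hj).le]; ring
    rw [hw N, ih, sum_range_succ, prod_range_succ, Nat.Ico_succ_singleton, prod_singleton, hsum]
    ring

@[to_additive]
theorem prod_range_zmod_add {M : Type*} [CommMonoid M] {N : ℕ} [NeZero N] (f : ZMod N → M)
    (c : ZMod N) : ∏ i ∈ range N, f (c + i) = ∏ m, f m := by
  calc ∏ i ∈ range N, f (c + i) = ∏ m : ZMod N, f (c + m) :=
        prod_nbij' (fun i => (i : ZMod N)) ZMod.val (fun _ _ => mem_univ _)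
          (fun m _ => mem_range.2 m.val_lt) (fun _ hi => ZMod.val_natCast_of_lt (mem_range.1 hi))
          (fun m _ => ZMod.natCast_zmod_val m) fun _ _ => rfl
    _ = ∏ m, f m := Fintype.prod_equiv (Equiv.addLeft c) _ _ fun _ => rfl

theorem add_mem_Icc_of_mul_eq_sq {u v r : ℝ} (hu0 : 0 ≤ u) (hv0 : 0 ≤ v) (hu1 : u ≤ 1)
    (hv1 : v ≤ 1) (huv : u * v = r ^ 2) : u + v ∈ Set.Icc (2 * r) (1 + r ^ 2) :=
  ⟨by nlinarith [sq_nonneg (u - v)],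
    by nlinarith [mul_nonneg (sub_nonneg.2 hu1) (sub_nonneg.2 hv1)]⟩

theorem one_sub_prod_mul_add_eq_sum {N : ℕ} [NeZero N] (a Z X Xb : ZMod N → ℝ)
    (eqX : ∀ k, X k = a (k + 1) * X (k + 1) + Z k)
    (eqXb : ∀ k, Xb (k + 1) = a k * Xb k + Z k) (k : ZMod N) :
    (1 - ∏ m, a m) * (X k + a k * Xb k) = ∑ j ∈ range N,
      ((∏ i ∈ range j, a (k + 1 + i)) + ∏ i ∈ Ico j N, a (k + 1 + i)) * Z (k + j) := by
  have hsucc : ∀ j : ℕ, k + ((j + 1 : ℕ) : ZMod N) = k + j + 1 := fun j => by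
    rw [Nat.cast_succ, add_assoc]
  have hshift : ∀ j : ℕ, k + 1 + (j : ZMod N) = k + j + 1 := fun j => add_right_comm _ _ _
  have hX := unfold_backward_recurrence (fun i => a (k + 1 + i)) (fun j => Z (k + j))
    (fun j => X (k + j)) (fun j => by simp only [hsucc, hshift]; exact eqX _) N
  have hW := unfold_forward_recurrence (fun i => a (k + 1 + i)) (fun j => Z (k + j))
    (fun j => a (k + j) * Xb (k + j)) (fun j => by simp only [hsucc, hshift, eqXb]) N
  simp only [ZMod.natCast_self, Nat.cast_zero, add_zero, prod_range_zmod_add] at hX hW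
  simp only [add_mul, sum_add_distrib]
  linear_combination hX + hW

theorem two_mul_sum_le_one_sub_sq_mul_le_one_add_sq_mul_sum {N : ℕ} [NeZero N]
    (a Z X Xb : ZMod N → ℝ) (r : ℝ) (ha0 : ∀ m, 0 ≤ a m) (ha1 : ∀ m, a m ≤ 1)
    (hprod : ∏ m, a m = r ^ 2) (hZ : ∀ m, 0 ≤ Z m)
    (eqX : ∀ k, X k = a (k + 1) * X (k + 1) + Z k)
    (eqXb : ∀ k, Xb (k + 1) = a k * Xb k + Z k) (k : ZMod N) :
    2 * r * ∑ m, Z m ≤ (1 - r ^ 2) * (X k + a k * Xb k) ∧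
      (1 - r ^ 2) * (X k + a k * Xb k) ≤ (1 + r ^ 2) * ∑ m, Z m := by
  have hcoef : ∀ j ∈ range N, (∏ i ∈ range j, a (k + 1 + i)) + ∏ i ∈ Ico j N, a (k + 1 + i) ∈
      Set.Icc (2 * r) (1 + r ^ 2) := by
    intro j hj
    refine add_mem_Icc_of_mul_eq_sq (prod_nonneg fun _ _ => ha0 _) (prod_nonneg fun _ _ => ha0 _)
      (prod_le_one (fun _ _ => ha0 _) fun _ _ => ha1 _)
      (prod_le_one (fun _ _ => ha0 _) fun _ _ => ha1 _) ?_
    rw [prod_range_mul_prod_Ico _ (mem_range.1 hj).le, prod_range_zmod_add, hprod]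
  rw [← hprod, one_sub_prod_mul_add_eq_sum a Z X Xb eqX eqXb k, hprod, ← sum_range_zmod_add Z k,
    mul_sum, mul_sum]
  exact ⟨sum_le_sum fun j hj => mul_le_mul_of_nonneg_right (hcoef j hj).1 (hZ _),
    sum_le_sum fun j hj => mul_le_mul_of_nonneg_right (hcoef j hj).2 (hZ _)⟩

section Pairing

variable {ι : Type*} [Fintype ι] {ω : ι → ι} {b Y : ι → ℝ}

theorem sum_div_one_add_mul_pair_eq (hω : Function.Involutive ω) (hbω : ∀ k, b (ω k) = b k)
    (hb : ∀ k, 0 ≤ b k) :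
    ∑ k, b k / (1 + b k) * ((Y (ω k) + b k * Y k) + (Y k + b k * Y (ω k))) =
      2 * ∑ k, b k * Y k := by
  have hterm : ∀ k, b k / (1 + b k) * ((Y (ω k) + b k * Y k) + (Y k + b k * Y (ω k))) =
      b k * Y k + b (ω k) * Y (ω k) := fun k => by
    have : 1 + b k ≠ 0 := by linarith [hb k]
    rw [hbω]; field_simp; ring
  rw [sum_congr rfl fun k _ => hterm k, sum_add_distrib,
    Fintype.sum_bijective ω hω.bijective (fun k => b (ω k) * Y (ω k)) (fun k => b k * Y k)
      fun _ => rfl]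
  ring

theorem mul_sum_le_mul_sum_div_one_add (hω : Function.Involutive ω)
    (hbω : ∀ k, b (ω k) = b k) (hb : ∀ k, 0 ≤ b k) {c M : ℝ}
    (hP : ∀ k, c * (Y (ω k) + b k * Y k) ≤ M) :
    c * ∑ k, b k * Y k ≤ M * ∑ k, b k / (1 + b k) := by
  have hpair : ∀ k, c * ((Y (ω k) + b k * Y k) + (Y k + b k * Y (ω k))) ≤ 2 * M := fun k => by
    have := hP (ω k); rw [hω k, hbω k] at this; linarith [hP k]
  have := sum_le_sum fun k (_ : k ∈ univ) =>
    mul_le_mul_of_nonneg_left (hpair k) (div_nonneg (hb k) (by linarith [hb k] : (0 : ℝ) ≤ 1 + b k))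
  simp only [mul_left_comm _ c, ← mul_sum, sum_div_one_add_mul_pair_eq hω hbω hb] at this
  rw [← sum_mul] at this
  linarith

theorem mul_sum_div_one_add_le_mul_sum (hω : Function.Involutive ω)
    (hbω : ∀ k, b (ω k) = b k) (hb : ∀ k, 0 ≤ b k) {c m : ℝ}
    (hP : ∀ k, m ≤ c * (Y (ω k) + b k * Y k)) :
    m * ∑ k, b k / (1 + b k) ≤ c * ∑ k, b k * Y k := by
  have := mul_sum_le_mul_sum_div_one_add (Y := Y) hω hbω hb (c := -c) (M := -m) fun k => by
    linarith [hP k]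
  linarith

end Pairing

theorem Real.tanh_eq_one_sub_sq_div (x : ℝ) :
    Real.tanh x = (1 - Real.exp (-x) ^ 2) / (1 + Real.exp (-x) ^ 2) := by
  have hx : Real.exp x * Real.exp (-x) = 1 := by rw [← Real.exp_add, add_neg_cancel, Real.exp_zero]
  rw [Real.tanh_eq, div_eq_div_iff (by positivity) (by positivity)]
  linear_combination 2 * Real.exp (-x) * hx

theorem Real.sinh_eq_one_sub_sq_div (x : ℝ) :
    Real.sinh x = (1 - Real.exp (-x) ^ 2) / (2 * Real.exp (-x)) := by
  have hx : Real.exp x * Real.exp (-x) = 1 := by rw [← Real.exp_add, add_neg_cancel, Real.exp_zero]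
  rw [Real.sinh_eq, div_eq_div_iff (by norm_num) (by positivity)]
  linear_combination 2 * hx

theorem tanh_le_sum_le_sinh_of_lim_system_degenerate_general
    (n : ℕ) [NeZero n] (h : ℝ) (hh : 0 < h)
    (L ℓ' X Xb Y : ZMod (2 * n) → ℝ)
    (ω : ZMod (2 * n) → ZMod (2 * n))
    (hL : ∀ k, 0 ≤ L k)
    (hω : ∀ k, ω (ω k) = k)
    (hℓω : ∀ k, ℓ' (ω k) = ℓ' k)
    (hY : ∀ k, 0 < Y k)
    (eqY : ∀ k, Y k = Real.exp (-h * L (ω k + 1)) * X (ω k + 1)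
        + Real.exp (-h * L (ω k)) * Xb (ω k))
    (eqX : ∀ k, X k = Real.exp (-h * L (k + 1)) * X (k + 1)
        + Real.exp (-h * ℓ' k) * Y k)
    (eqXb : ∀ k, Xb k = Real.exp (-h * L (k - 1)) * Xb (k - 1)
        + Real.exp (-h * ℓ' (k - 1)) * Y (k - 1)) :
    Real.tanh (h * (∑ k, L k) / 2) ≤ ∑ k, 1 / (1 + Real.exp (h * ℓ' k)) ∧
      (∑ k, 1 / (1 + Real.exp (h * ℓ' k))) ≤ Real.sinh (h * (∑ k, L k) / 2) := by
  set r := Real.exp (-(h * (∑ k, L k) / 2))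
  set a : ZMod (2 * n) → ℝ := fun m => Real.exp (-h * L m)
  set b : ZMod (2 * n) → ℝ := fun k => Real.exp (-h * ℓ' k)
  have hprod : ∏ m, a m = r ^ 2 := by
    rw [← Real.exp_sum, ← Real.exp_nat_mul, ← mul_sum]; congr 1; push_cast; ring
  have ha1 : ∀ m, a m ≤ 1 := fun m =>
    Real.exp_le_one_iff.2 (mul_nonpos_of_nonpos_of_nonneg (neg_nonpos.2 hh.le) (hL m))
  have hb : ∀ k, 0 ≤ b k := fun k => (Real.exp_pos _).le
  have hbω : ∀ k, b (ω k) = b k := fun k => by simp only [b, hℓω]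
  have hpair : ∀ k, Y (ω k) + b k * Y k = X k + a k * Xb k := fun k => by
    have := eqY (ω k); simp only [hω] at this; linarith [eqX k]
  have hbounds := two_mul_sum_le_one_sub_sq_mul_le_one_add_sq_mul_sum a (fun k => b k * Y k) X Xb r
    (fun _ => (Real.exp_pos _).le) ha1 hprod (fun k => mul_nonneg (hb k) (hY k).le) eqX
    (fun k => by simpa only [add_sub_cancel_right] using eqXb (k + 1))
  have hT : 0 < ∑ k, b k * Y k := sum_pos (fun k _ => mul_pos (Real.exp_pos _) (hY k)) univ_nonempty
  have hsigmoid : ∀ k, 1 / (1 + Real.exp (h * ℓ' k)) = b k / (1 + b k) := fun k => by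
    simp only [b, neg_mul]; exact Real.one_div_one_add_exp _
  simp only [hsigmoid, Real.tanh_eq_one_sub_sq_div, Real.sinh_eq_one_sub_sq_div]
  constructor
  · have := mul_sum_le_mul_sum_div_one_add hω hbω hb fun k => (hpair k).symm ▸ (hbounds k).2
    rw [div_le_iff₀ (by positivity)]
    exact le_of_mul_le_mul_right (by linarith) hT
  · have := mul_sum_div_one_add_le_mul_sum hω hbω hb fun k => (hpair k).symm ▸ (hbounds k).1
    rw [le_div_iff₀ (by positivity)]
    exact le_of_mul_le_mul_right (by linarith) hT

/-- Degenerate-edge extension of Theorem 2: with circle edge lengths allowed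
to vanish (but positive total length), the non-strict double inequality
tanh(hΛ/2) ≤ Σ 1/(1+exp(hℓ'ₖ)) ≤ sinh(hΛ/2) holds. -/
theorem tanh_le_sum_le_sinh_of_lim_system_degenerate
    (n : ℕ) [NeZero n] (hn : 1 ≤ n) (h : ℝ) (hh : 0 < h)
    (L ℓ' X Xb Y : ZMod (2 * n) → ℝ)
    (ω : ZMod (2 * n) → ZMod (2 * n))
    (hL : ∀ k, 0 ≤ L k) (hΛ : 0 < ∑ k, L k)
    (hω : ∀ k, ω (ω k) = k) (hω' : ∀ k, ω k ≠ k)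
    (hℓpos : ∀ k, 0 < ℓ' k) (hℓω : ∀ k, ℓ' (ω k) = ℓ' k)
    (hX : ∀ k, 0 < X k) (hXb : ∀ k, 0 < Xb k) (hY : ∀ k, 0 < Y k)
    (eqY : ∀ k, Y k = Real.exp (-h * L (ω k + 1)) * X (ω k + 1)
        + Real.exp (-h * L (ω k)) * Xb (ω k))
    (eqX : ∀ k, X k = Real.exp (-h * L (k + 1)) * X (k + 1)
        + Real.exp (-h * ℓ' k) * Y k)
    (eqXb : ∀ k, Xb k = Real.exp (-h * L (k - 1)) * Xb (k - 1)
        + Real.exp (-h * ℓ' (k - 1)) * Y (k - 1)) :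
    Real.tanh (h * (∑ k, L k) / 2) ≤ ∑ k, 1 / (1 + Real.exp (h * ℓ' k)) ∧
      (∑ k, 1 / (1 + Real.exp (h * ℓ' k))) ≤ Real.sinh (h * (∑ k, L k) / 2) :=
  tanh_le_sum_le_sinh_of_lim_system_degenerate_general n h hh L ℓ' X Xb Y ω hL hω hℓω hY eqY eqX
    eqXb
end

section
/- Under Lim's system hypotheses (see context), the Y-variables satisfy the closed equation: for every k ∈ ZMod(2n), Y_{ω(k)} = (1/sinh(h·Λ/2)) · ( Σ_{i ∈ ZMod(2n), i ≠ k} exp(−h·ℓ'_i)·cosh(h·(S(k,i) − Λ/2))·Y_i + exp(−h·ℓ'_k)·exp(−h·Λ/2)·Y_k ), where for i ≠ k the cyclic partial sum S(k,i) := Σ_{t=1}^{d} L_{k+t}, with d the unique integer in {1, …, 2n−1} such that i = k + d in ZMod(2n). -/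
/-!
Both `X` and `X̄` obey first-order linear recurrences around the cycle `ZMod N`, driven by the
source `cᵢ = e^{-hℓ'ᵢ} Yᵢ`, and one turn around the cycle multiplies by `e^{-hΛ}`. Summation by
parts against the weights `e^{-h S(k,i)}` and `e^{-h (Λ - S(k,i))}`, which satisfy the homogeneous
recurrence except at `i = k`, solves them:
`(1 - e^{-hΛ}) X_k = ∑ᵢ e^{-h S(k,i)} cᵢ` and
`(1 - e^{-hΛ}) e^{-hL_k} X̄_k = ∑ᵢ e^{-h (Λ - S(k,i))} cᵢ`.
As `ω` is an involution, `Y_{ω k} = e^{-hL_{k+1}} X_{k+1} + e^{-hL_k} X̄_k`; adding the two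
solutions pairs the weights into `2 e^{-hΛ/2} cosh (h (S - Λ/2))`, and
`1 - e^{-hΛ} = 2 e^{-hΛ/2} sinh (hΛ/2)`.
-/

open Finset

namespace ZMod

variable {N : ℕ} [NeZero N]

theorem val_sub_one_add_one (x : ZMod N) :
    (x - 1).val + 1 = if x = 0 then N else x.val := by
  split_ifs with hx
  · obtain ⟨m, rfl⟩ := Nat.exists_eq_succ_of_ne_zero (NeZero.ne N)
    rw [hx, zero_sub, val_neg_one]
  · have hN : N ≠ 1 := by
      rintro rfl
      exact hx (Subsingleton.elim _ _)
    have hpos : 0 < x.val := val_pos.2 hx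
    rw [val_sub (by rw [val_one_eq_one_mod, Nat.one_mod_eq_one.2 hN]; exact hpos),
      val_one_eq_one_mod, Nat.one_mod_eq_one.2 hN]
    omega

theorem sum_Icc_one_add_natCast_eq_sum {M : Type*} [AddCommMonoid M] (f : ZMod N → M)
    (k : ZMod N) :
    ∑ t ∈ Icc 1 N, f (k + t) = ∑ j, f j := by
  refine sum_nbij' (fun t => k + t) (fun j => (j - k - 1).val + 1) (fun _ _ => mem_univ _)
    (fun j _ => mem_Icc.2 ⟨by omega, val_lt (j - k - 1)⟩) (fun t ht => ?_) (fun j _ => ?_)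
    (fun _ _ => rfl)
  · obtain ⟨ht1, htN⟩ := mem_Icc.1 ht
    have : k + (t : ZMod N) - k - 1 = ((t - 1 : ℕ) : ZMod N) := by
      rw [Nat.cast_sub ht1]; ring
    simp only [this, val_cast_of_lt (show t - 1 < N by omega)]
    omega
  · simp only [Nat.cast_add, natCast_zmod_val, Nat.cast_one]
    ring

end ZMod

/-- The paper's `S(k, i)`: the sum of `L` over the cyclic arc `k + 1, …, i`, empty when `i = k`. -/
def arcSum {M : Type*} [AddCommMonoid M] {N : ℕ} (L : ZMod N → M) (k i : ZMod N) : M :=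
  ∑ t ∈ Icc 1 (i - k).val, L (k + t)

section arcSum

variable {M : Type*} [AddCommMonoid M] {N : ℕ} [NeZero N] (L : ZMod N → M) (k : ZMod N)

omit [NeZero N] in
@[simp]
theorem arcSum_self : arcSum L k k = 0 := by
  simp [arcSum]

theorem arcSum_sub_one_add (i : ZMod N) :
    arcSum L k (i - 1) + L i = if i = k then ∑ j, L j else arcSum L k i := by
  have hlen := ZMod.val_sub_one_add_one (i - k)
  have hlast : k + (((i - 1 - k).val + 1 : ℕ) : ZMod N) = i := by
    push_cast [ZMod.natCast_zmod_val]; ring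
  calc arcSum L k (i - 1) + L i = ∑ t ∈ Icc 1 ((i - 1 - k).val + 1), L (k + t) := by
        rw [sum_Icc_succ_top (by omega), hlast, arcSum]
    _ = if i = k then ∑ j, L j else arcSum L k i := by
        rw [sub_right_comm, hlen]
        by_cases hik : i = k
        · rw [if_pos (sub_eq_zero.2 hik), if_pos hik, ZMod.sum_Icc_one_add_natCast_eq_sum]
        · rw [if_neg (sub_ne_zero.2 hik), if_neg hik, arcSum]

end arcSum

namespace Real

theorem exp_neg_mul_add_exp_neg_mul_sub (h x s : ℝ) :
    exp (-h * x) + exp (-h * (s - x)) = 2 * exp (-h * s / 2) * cosh (h * (x - s / 2)) := by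
  have e₁ : exp (-h * x) = exp (-h * s / 2) * exp (-(h * (x - s / 2))) := by
    rw [← exp_add]; ring_nf
  have e₂ : exp (-h * (s - x)) = exp (-h * s / 2) * exp (h * (x - s / 2)) := by
    rw [← exp_add]; ring_nf
  rw [e₁, e₂, cosh_eq]
  ring

theorem one_sub_exp_neg_mul (h s : ℝ) :
    1 - exp (-h * s) = 2 * exp (-h * s / 2) * sinh (h * s / 2) := by
  have e₁ : exp (-h * s / 2) * exp (h * s / 2) = 1 := by
    rw [← exp_add, ← exp_zero]; ring_nf
  have e₂ : exp (-h * s) = exp (-h * s / 2) * exp (-(h * s / 2)) := by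
    rw [← exp_add]; ring_nf
  rw [e₂, sinh_eq]
  linear_combination -e₁

end Real

section CyclicRecurrence

open Real

variable {N : ℕ} [NeZero N] (h : ℝ) (L c : ZMod N → ℝ)

theorem one_sub_exp_mul_eq_sum_of_forward_recurrence (X : ZMod N → ℝ)
    (hX : ∀ k, X k = exp (-h * L (k + 1)) * X (k + 1) + c k) (k : ZMod N) :
    (1 - exp (-h * ∑ j, L j)) * X k = ∑ i, exp (-h * arcSum L k i) * c i := by
  set w : ZMod N → ℝ := fun i => exp (-h * arcSum L k i)
  have hw : ∀ i, w i - w (i - 1) * exp (-h * L i) =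
      if i = k then 1 - exp (-h * ∑ j, L j) else 0 := by
    intro i
    simp only [w]
    rw [← exp_add, ← mul_add, arcSum_sub_one_add]
    split_ifs with hik
    · rw [hik, arcSum_self, mul_zero, exp_zero]
    · exact sub_self _
  symm
  calc ∑ i, w i * c i
      = ∑ i, w i * X i - ∑ i, w i * (exp (-h * L (i + 1)) * X (i + 1)) := by
        rw [← sum_sub_distrib]
        exact sum_congr rfl fun i _ => by rw [hX i]; ring
    _ = ∑ i, w i * X i - ∑ i, w (i - 1) * (exp (-h * L i) * X i) := by
        congr 1
        exact Fintype.sum_equiv (Equiv.addRight 1) _ _ fun i => by simp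
    _ = ∑ i, (w i - w (i - 1) * exp (-h * L i)) * X i := by
        rw [← sum_sub_distrib]
        exact sum_congr rfl fun i _ => by ring
    _ = (1 - exp (-h * ∑ j, L j)) * X k := by
        simp only [hw, ite_mul, zero_mul, sum_ite_eq', mem_univ, if_true]

theorem one_sub_exp_mul_eq_sum_of_backward_recurrence (Xb : ZMod N → ℝ)
    (hXb : ∀ k, Xb k = exp (-h * L (k - 1)) * Xb (k - 1) + c (k - 1)) (k : ZMod N) :
    (1 - exp (-h * ∑ j, L j)) * (exp (-h * L k) * Xb k) =
      ∑ i, exp (-h * ((∑ j, L j) - arcSum L k i)) * c i := by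
  set v : ZMod N → ℝ := fun i => exp (-h * ((∑ j, L j) - arcSum L k i))
  have hv : ∀ i, v (i - 1) - v i * exp (-h * L i) =
      if i = k then (1 - exp (-h * ∑ j, L j)) * exp (-h * L k) else 0 := by
    intro i
    have hS := arcSum_sub_one_add L k i
    simp only [v]
    split_ifs at hS ⊢ with hik
    · subst hik
      rw [eq_sub_of_add_eq hS, arcSum_self, sub_sub_cancel, sub_zero, ← exp_add, one_sub_mul,
        ← exp_add]
    · rw [eq_sub_of_add_eq hS, ← exp_add, sub_eq_zero]
      ring_nf
  symm
  calc ∑ i, v i * c i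
      = ∑ i, v i * Xb (i + 1) - ∑ i, v i * (exp (-h * L i) * Xb i) := by
        rw [← sum_sub_distrib]
        exact sum_congr rfl fun i _ => by rw [hXb (i + 1), add_sub_cancel_right]; ring
    _ = ∑ i, v (i - 1) * Xb i - ∑ i, v i * (exp (-h * L i) * Xb i) := by
        congr 1
        exact Fintype.sum_equiv (Equiv.addRight 1) _ _ fun i => by simp
    _ = ∑ i, (v (i - 1) - v i * exp (-h * L i)) * Xb i := by
        rw [← sum_sub_distrib]
        exact sum_congr rfl fun i _ => by ring
    _ = (1 - exp (-h * ∑ j, L j)) * (exp (-h * L k) * Xb k) := by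
        simp only [hv, ite_mul, zero_mul, sum_ite_eq', mem_univ, if_true, mul_assoc]

theorem sinh_mul_eq_sum_cosh_of_cyclic_recurrences (X Xb : ZMod N → ℝ)
    (hX : ∀ k, X k = exp (-h * L (k + 1)) * X (k + 1) + c k)
    (hXb : ∀ k, Xb k = exp (-h * L (k - 1)) * Xb (k - 1) + c (k - 1)) (k : ZMod N) :
    sinh (h * (∑ j, L j) / 2) * (exp (-h * L (k + 1)) * X (k + 1) + exp (-h * L k) * Xb k) =
      ∑ i ∈ univ.erase k, cosh (h * (arcSum L k i - (∑ j, L j) / 2)) * c i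
        + exp (-h * (∑ j, L j) / 2) * c k := by
  have hfwd := one_sub_exp_mul_eq_sum_of_forward_recurrence h L c X hX k
  have hbwd := one_sub_exp_mul_eq_sum_of_backward_recurrence h L c Xb hXb k
  set Λ := ∑ j, L j
  have hkernel : ∑ i, exp (-h * arcSum L k i) * c i + ∑ i, exp (-h * (Λ - arcSum L k i)) * c i =
      2 * exp (-h * Λ / 2) * (∑ i ∈ univ.erase k, cosh (h * (arcSum L k i - Λ / 2)) * c i
        + cosh (h * Λ / 2) * c k) := by
    rw [← sum_add_distrib, ← add_sum_erase _ _ (mem_univ k), add_comm, mul_add, mul_sum]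
    simp only [← add_mul, exp_neg_mul_add_exp_neg_mul_sub, arcSum_self, zero_sub, mul_neg,
      cosh_neg, mul_div_assoc, mul_assoc]
  apply mul_left_cancel₀ (show 2 * exp (-h * Λ / 2) ≠ 0 by positivity)
  -- the `i = k` term of the paired sums is `2 e^{-hΛ/2} cosh (hΛ/2) c_k`; `cosh - sinh = e^{-·}`
  linear_combination
    (-(exp (-h * L (k + 1)) * X (k + 1) + exp (-h * L k) * Xb k + c k)) * one_sub_exp_neg_mul h Λ
      + hfwd + hbwd + hkernel - (1 - exp (-h * Λ)) * hX k
      + 2 * exp (-h * Λ / 2) * c k * cosh_sub_sinh (h * Λ / 2)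
      + 2 * exp (-h * Λ / 2) * c k * congrArg exp (by ring : -(h * Λ / 2) = -h * Λ / 2)

end CyclicRecurrence

theorem Y_closed_equation_of_lim_system_general
    (n : ℕ) [NeZero n] (h : ℝ) (hh : 0 < h)
    (L ℓ' X Xb Y : ZMod (2 * n) → ℝ)
    (ω : ZMod (2 * n) → ZMod (2 * n))
    (hL : ∀ k, 0 < L k)
    (hω : ∀ k, ω (ω k) = k)
    (eqY : ∀ k, Y k = Real.exp (-h * L (ω k + 1)) * X (ω k + 1)
        + Real.exp (-h * L (ω k)) * Xb (ω k))
    (eqX : ∀ k, X k = Real.exp (-h * L (k + 1)) * X (k + 1)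
        + Real.exp (-h * ℓ' k) * Y k)
    (eqXb : ∀ k, Xb k = Real.exp (-h * L (k - 1)) * Xb (k - 1)
        + Real.exp (-h * ℓ' (k - 1)) * Y (k - 1)) :
    ∀ k : ZMod (2 * n),
      Y (ω k) = (1 / Real.sinh (h * (∑ j, L j) / 2)) *
        ((∑ i ∈ Finset.univ.erase k,
            Real.exp (-h * ℓ' i) *
              Real.cosh (h * ((∑ t ∈ Finset.Icc 1 (i - k).val,
                  L (k + (t : ZMod (2 * n)))) - (∑ j, L j) / 2)) * Y i)
          + Real.exp (-h * ℓ' k) * Real.exp (-h * (∑ j, L j) / 2) * Y k) := by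
  intro k
  have hΛ : 0 < ∑ j, L j := sum_pos (fun j _ => hL j) univ_nonempty
  have hsinh : Real.sinh (h * (∑ j, L j) / 2) ≠ 0 := (Real.sinh_pos_iff.2 (by positivity)).ne'
  have hYω : Y (ω k) = Real.exp (-h * L (k + 1)) * X (k + 1) + Real.exp (-h * L k) * Xb k := by
    simpa only [hω] using eqY (ω k)
  rw [one_div_mul_eq_div, eq_div_iff hsinh, mul_comm, hYω,
    sinh_mul_eq_sum_cosh_of_cyclic_recurrences h L (fun i => Real.exp (-h * ℓ' i) * Y i) X Xb
      eqX eqXb k]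
  congr 1
  · exact sum_congr rfl fun i _ => by rw [arcSum]; ring
  · ring

/-- Closed equation satisfied by the Y-variables of Lim's system:
`Y_{ω(k)} = (1/sinh(hΛ/2)) (Σ_{i≠k} e^{-hℓ'ᵢ} cosh(h(S(k,i) − Λ/2)) Yᵢ
  + e^{-hℓ'ₖ} e^{-hΛ/2} Yₖ)`, where `S(k,i) = Σ_{t=1}^{d} L_{k+t}` with
`d ∈ {1,…,2n−1}` the representative of `i − k`. -/
theorem Y_closed_equation_of_lim_system
    (n : ℕ) [NeZero n] (hn : 1 ≤ n) (h : ℝ) (hh : 0 < h)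
    (L ℓ' X Xb Y : ZMod (2 * n) → ℝ)
    (ω : ZMod (2 * n) → ZMod (2 * n))
    (hL : ∀ k, 0 < L k)
    (hω : ∀ k, ω (ω k) = k) (hω' : ∀ k, ω k ≠ k)
    (hℓpos : ∀ k, 0 < ℓ' k) (hℓω : ∀ k, ℓ' (ω k) = ℓ' k)
    (hX : ∀ k, 0 < X k) (hXb : ∀ k, 0 < Xb k) (hY : ∀ k, 0 < Y k)
    (eqY : ∀ k, Y k = Real.exp (-h * L (ω k + 1)) * X (ω k + 1)
        + Real.exp (-h * L (ω k)) * Xb (ω k))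
    (eqX : ∀ k, X k = Real.exp (-h * L (k + 1)) * X (k + 1)
        + Real.exp (-h * ℓ' k) * Y k)
    (eqXb : ∀ k, Xb k = Real.exp (-h * L (k - 1)) * Xb (k - 1)
        + Real.exp (-h * ℓ' (k - 1)) * Y (k - 1)) :
    ∀ k : ZMod (2 * n),
      Y (ω k) = (1 / Real.sinh (h * (∑ j, L j) / 2)) *
        ((∑ i ∈ Finset.univ.erase k,
            Real.exp (-h * ℓ' i) *
              Real.cosh (h * ((∑ t ∈ Finset.Icc 1 (i - k).val,
                  L (k + (t : ZMod (2 * n)))) - (∑ j, L j) / 2)) * Y i)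
          + Real.exp (-h * ℓ' k) * Real.exp (-h * (∑ j, L j) / 2) * Y k) :=
  Y_closed_equation_of_lim_system_general n h hh L ℓ' X Xb Y ω hL hω eqY eqX eqXb
end

section
/- Under Lim's system hypotheses (see context), for every k ∈ ZMod(2n): (1 + exp(−h·ℓ'_k))·(Y_k + Y_{ω(k)}) ≤ (1/tanh(h·Λ/2)) · Σ_{i ∈ ZMod(2n)} exp(−h·ℓ'_i)·(Y_i + Y_{ω(i)}). -/
/-!
Both recursions (ii) and (iii) run once around the cycle `ZMod (2n)`. Unrolling them a full
turn expresses `(1 - Q) X_k` and `(1 - Q) X̄_{k+1}`, where `Q = e^{-hΛ}`, as combinations of the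
`w_i = e^{-hℓ'_i} Y_i` whose weights `p, q ∈ (0, 1]` are `e^{-h·(length)}` of the two
complementary arcs between `k` and `i`. So `pq = Q` and hence `p + q ≤ 1 + Q` (this is the bound
`cosh(h(S - Λ/2)) ≤ cosh(hΛ/2)`). Since (i)–(iii) give `X_k + X̄_{k+1} = Y_{ω k} + 2 w_k`, this
yields `(1 - Q)(Y_{ω k} + w_k) ≤ (1 + Q) Σ w_i`. Adding this at `k` and `ω k` and using
`tanh(hΛ/2) = (1 - Q)/(1 + Q)` gives the claim.
-/

open Finset

@[to_additive]
theorem Finset.prod_range_eq_prod_zmod_val {m : ℕ} [NeZero m] {M : Type*} [CommMonoid M]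
    (f : ℕ → M) : ∏ t ∈ range m, f t = ∏ i : ZMod m, f i.val :=
  prod_nbij' (fun t => (t : ZMod m)) ZMod.val (fun _ _ => mem_univ _)
    (fun i _ => mem_range.2 (ZMod.val_lt i))
    (fun _ ht => ZMod.val_natCast_of_lt (mem_range.1 ht))
    (fun i _ => ZMod.natCast_zmod_val i)
    (fun _ ht => by rw [ZMod.val_natCast_of_lt (mem_range.1 ht)])

namespace CyclicRecurrence

variable {m : ℕ} {R : Type*}

def arcProd [CommMonoid R] (a : ZMod m → R) (k : ZMod m) (j : ℕ) : R :=
  ∏ t ∈ range j, a (k + t + 1)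

section CommMonoid

variable [CommMonoid R] (a : ZMod m → R)

@[simp]
theorem arcProd_zero (k : ZMod m) : arcProd a k 0 = 1 := prod_range_zero _

theorem arcProd_succ (k : ZMod m) (j : ℕ) :
    arcProd a k (j + 1) = arcProd a k j * a (k + j + 1) :=
  prod_range_succ _ _

theorem arcProd_succ' (k : ZMod m) (j : ℕ) :
    arcProd a k (j + 1) = a (k + 1) * arcProd a (k + 1) j := by
  rw [arcProd, prod_range_succ', mul_comm, arcProd]
  push_cast
  simp only [add_zero]
  congr 1
  refine prod_congr rfl fun t _ => congrArg a (by ring)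

theorem arcProd_add (k : ZMod m) (j l : ℕ) :
    arcProd a k (j + l) = arcProd a k j * arcProd a (k + j) l := by
  rw [arcProd, prod_range_add, arcProd, arcProd]
  push_cast
  congr 1
  refine prod_congr rfl fun t _ => congrArg a (by ring)

theorem arcProd_self [NeZero m] (k : ZMod m) : arcProd a k m = ∏ i, a i := by
  rw [arcProd, prod_range_eq_prod_zmod_val (fun t => a (k + t + 1))]
  simp only [ZMod.natCast_zmod_val]
  rw [← Equiv.prod_comp (Equiv.addLeft (k + 1)) a]
  exact prod_congr rfl fun i _ => congrArg a (by simp only [Equiv.coe_addLeft]; ring)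

theorem arcProd_mul_arcProd_eq_prod [NeZero m] {k i : ZMod m} (hik : i ≠ k) :
    arcProd a k (i - k).val * arcProd a i (k - i).val = ∏ j, a j := by
  have : NeZero (i - k) := ⟨sub_ne_zero.2 hik⟩
  have hval : (k - i).val = m - (i - k).val := by
    rw [← neg_sub, ZMod.val_neg_of_ne_zero]
  have hle : (i - k).val ≤ m := (ZMod.val_lt _).le
  have hi : k + ((i - k).val : ZMod m) = i := by rw [ZMod.natCast_zmod_val, add_sub_cancel]
  rw [hval]
  generalize (i - k).val = j at hle hi ⊢
  subst hi
  rw [← arcProd_add, Nat.add_sub_cancel' hle, arcProd_self]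

end CommMonoid

section CommSemiring

variable [CommSemiring R] {a b x : ZMod m → R}

theorem eq_arcProd_mul_add_sum_of_forward (hx : ∀ i, x i = a (i + 1) * x (i + 1) + b i)
    (k : ZMod m) (j : ℕ) :
    x k = arcProd a k j * x (k + j) + ∑ t ∈ range j, arcProd a k t * b (k + t) := by
  induction j with
  | zero => simp
  | succ j ih =>
    rw [ih, hx (k + j), sum_range_succ, arcProd_succ]
    push_cast
    ring_nf

theorem eq_arcProd_mul_add_sum_of_backward
    (hx : ∀ i, x i = a (i - 1) * x (i - 1) + b (i - 1)) (k : ZMod m) (j : ℕ) :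
    x (k + 1) = arcProd a (k - j) j * x (k + 1 - j) +
      ∑ t ∈ range j, arcProd a (k - t) t * b (k - t) := by
  induction j with
  | zero => simp
  | succ j ih =>
    rw [ih, hx (k + 1 - j), sum_range_succ, arcProd_succ' a (k - (j + 1 : ℕ))]
    push_cast
    ring_nf

end CommSemiring

section CommRing

variable [CommRing R] [NeZero m] {a b x : ZMod m → R}

theorem one_sub_prod_mul_eq_sum_of_forward (hx : ∀ i, x i = a (i + 1) * x (i + 1) + b i)
    (k : ZMod m) : (1 - ∏ i, a i) * x k = ∑ i, arcProd a k (i - k).val * b i := by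
  have hunroll := eq_arcProd_mul_add_sum_of_forward hx k m
  rw [arcProd_self, ZMod.natCast_self, add_zero,
    sum_range_eq_sum_zmod_val (fun t => arcProd a k t * b (k + t))] at hunroll
  calc (1 - ∏ i, a i) * x k = ∑ i : ZMod m, arcProd a k i.val * b (k + i.val) := by
        linear_combination hunroll
    _ = _ := (Fintype.sum_equiv (Equiv.subRight k) _ _ fun i => by
        simp only [Equiv.subRight_apply, ZMod.natCast_zmod_val, add_sub_cancel]).symm

theorem one_sub_prod_mul_eq_sum_of_backward
    (hx : ∀ i, x i = a (i - 1) * x (i - 1) + b (i - 1)) (k : ZMod m) :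
    (1 - ∏ i, a i) * x (k + 1) = ∑ i, arcProd a i (k - i).val * b i := by
  have hunroll := eq_arcProd_mul_add_sum_of_backward hx k m
  rw [ZMod.natCast_self, sub_zero, sub_zero, arcProd_self,
    sum_range_eq_sum_zmod_val (fun t => arcProd a (k - t) t * b (k - t))] at hunroll
  calc (1 - ∏ i, a i) * x (k + 1)
        = ∑ i : ZMod m, arcProd a (k - i.val) i.val * b (k - i.val) := by
        linear_combination hunroll
    _ = _ := (Fintype.sum_equiv (Equiv.subLeft k) _ _ fun i => by
        simp only [Equiv.subLeft_apply, ZMod.natCast_zmod_val, sub_sub_cancel]).symm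

end CommRing

section Real

variable {a : ZMod m → ℝ}

theorem arcProd_le_one (ha₀ : ∀ i, 0 ≤ a i) (ha₁ : ∀ i, a i ≤ 1) (k : ZMod m) (j : ℕ) :
    arcProd a k j ≤ 1 :=
  prod_le_one (fun _ _ => ha₀ _) fun _ _ => ha₁ _

theorem arcProd_add_arcProd_le [NeZero m] (ha₀ : ∀ i, 0 ≤ a i) (ha₁ : ∀ i, a i ≤ 1)
    (k i : ZMod m) :
    arcProd a k (i - k).val + arcProd a i (k - i).val ≤
      1 + ∏ j, a j + if i = k then 1 - ∏ j, a j else 0 := by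
  by_cases hik : i = k
  · subst hik
    simp only [sub_self, ZMod.val_zero, arcProd_zero, if_true]
    linarith
  · rw [if_neg hik, add_zero, ← arcProd_mul_arcProd_eq_prod a hik]
    nlinarith [mul_nonneg (sub_nonneg.2 (arcProd_le_one ha₀ ha₁ k (i - k).val))
      (sub_nonneg.2 (arcProd_le_one ha₀ ha₁ i (k - i).val))]

theorem one_sub_prod_mul_add_le [NeZero m] {b x y : ZMod m → ℝ} (ha₀ : ∀ i, 0 ≤ a i)
    (ha₁ : ∀ i, a i ≤ 1) (hb : ∀ i, 0 ≤ b i)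
    (hx : ∀ i, x i = a (i + 1) * x (i + 1) + b i)
    (hy : ∀ i, y i = a (i - 1) * y (i - 1) + b (i - 1)) (k : ZMod m) :
    (1 - ∏ i, a i) * (x k + y (k + 1)) ≤ (1 + ∏ i, a i) * ∑ i, b i + (1 - ∏ i, a i) * b k :=
  calc (1 - ∏ i, a i) * (x k + y (k + 1))
      = ∑ i, (arcProd a k (i - k).val + arcProd a i (k - i).val) * b i := by
        simp only [mul_add, one_sub_prod_mul_eq_sum_of_forward hx,
          one_sub_prod_mul_eq_sum_of_backward hy, add_mul, sum_add_distrib]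
    _ ≤ ∑ i, (1 + ∏ j, a j + if i = k then 1 - ∏ j, a j else 0) * b i :=
        sum_le_sum fun i _ =>
          mul_le_mul_of_nonneg_right (arcProd_add_arcProd_le ha₀ ha₁ k i) (hb i)
    _ = (1 + ∏ i, a i) * ∑ i, b i + (1 - ∏ i, a i) * b k := by
        simp only [add_mul, sum_add_distrib, ite_mul, zero_mul, sum_ite_eq', mem_univ, if_true,
          mul_sum]

end Real

end CyclicRecurrence

open CyclicRecurrence Real

theorem Real.tanh_eq_one_sub_exp_div (x : ℝ) :
    tanh x = (1 - exp (-2 * x)) / (1 + exp (-2 * x)) := by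
  have hexp : exp (-2 * x) = exp (-x) / exp x := by rw [← exp_sub]; ring_nf
  rw [tanh_eq, hexp]
  field_simp

theorem one_sub_exp_mul_le_of_lim_system {m : ℕ} [NeZero m] {h : ℝ} (hh : 0 ≤ h)
    {L ℓ' X Xb Y : ZMod m → ℝ} {ω : ZMod m → ZMod m} (hL : ∀ k, 0 ≤ L k)
    (hω : ∀ k, ω (ω k) = k) (hY : ∀ k, 0 ≤ Y k)
    (eqY : ∀ k, Y k = exp (-h * L (ω k + 1)) * X (ω k + 1) + exp (-h * L (ω k)) * Xb (ω k))
    (eqX : ∀ k, X k = exp (-h * L (k + 1)) * X (k + 1) + exp (-h * ℓ' k) * Y k)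
    (eqXb : ∀ k, Xb k = exp (-h * L (k - 1)) * Xb (k - 1) + exp (-h * ℓ' (k - 1)) * Y (k - 1))
    (k : ZMod m) :
    (1 - exp (-h * ∑ j, L j)) * (Y (ω k) + exp (-h * ℓ' k) * Y k) ≤
      (1 + exp (-h * ∑ j, L j)) * ∑ i, exp (-h * ℓ' i) * Y i := by
  have hprod : ∏ i, exp (-h * L i) = exp (-h * ∑ j, L j) := by rw [← exp_sum, mul_sum]
  have hcycle := one_sub_prod_mul_add_le (a := fun i => exp (-h * L i))
    (b := fun i => exp (-h * ℓ' i) * Y i) (fun _ => (exp_pos _).le)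
    (fun i => exp_le_one_iff.2 (by nlinarith [hL i])) (fun i => mul_nonneg (exp_pos _).le (hY i))
    eqX eqXb k
  have hY_ω : Y (ω k) + 2 * (exp (-h * ℓ' k) * Y k) = X k + Xb (k + 1) := by
    rw [eqY (ω k), hω, eqX k, eqXb (k + 1), add_sub_cancel_right]
    ring
  simp only [hprod] at hcycle
  linear_combination hcycle + (1 - exp (-h * ∑ j, L j)) * hY_ω

theorem lim_system_tanh_intermediate_inequality_general
    (n : ℕ) [NeZero n] (h : ℝ) (hh : 0 < h)
    (L ℓ' X Xb Y : ZMod (2 * n) → ℝ)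
    (ω : ZMod (2 * n) → ZMod (2 * n))
    (hL : ∀ k, 0 < L k)
    (hω : ∀ k, ω (ω k) = k)
    (hℓω : ∀ k, ℓ' (ω k) = ℓ' k)
    (hY : ∀ k, 0 < Y k)
    (eqY : ∀ k, Y k = Real.exp (-h * L (ω k + 1)) * X (ω k + 1)
        + Real.exp (-h * L (ω k)) * Xb (ω k))
    (eqX : ∀ k, X k = Real.exp (-h * L (k + 1)) * X (k + 1)
        + Real.exp (-h * ℓ' k) * Y k)
    (eqXb : ∀ k, Xb k = Real.exp (-h * L (k - 1)) * Xb (k - 1)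
        + Real.exp (-h * ℓ' (k - 1)) * Y (k - 1)) :
    ∀ k : ZMod (2 * n),
      (1 + Real.exp (-h * ℓ' k)) * (Y k + Y (ω k)) ≤
        (1 / Real.tanh (h * (∑ j, L j) / 2)) *
          ∑ i, Real.exp (-h * ℓ' i) * (Y i + Y (ω i)) := by
  intro k
  have hΛ : 0 < ∑ j, L j := sum_pos (fun i _ => hL i) univ_nonempty
  have hQ : exp (-h * ∑ j, L j) < 1 := exp_lt_one_iff.2 (by nlinarith)
  have hsymm : ∑ i, exp (-h * ℓ' i) * (Y i + Y (ω i)) = 2 * ∑ i, exp (-h * ℓ' i) * Y i := by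
    have hswap : ∑ i, exp (-h * ℓ' i) * Y (ω i) = ∑ i, exp (-h * ℓ' i) * Y i :=
      Fintype.sum_bijective ω (Function.Involutive.bijective hω) _ _ fun i => by rw [hℓω]
    simp only [mul_add, sum_add_distrib, hswap, two_mul]
  have key := one_sub_exp_mul_le_of_lim_system hh.le (fun i => (hL i).le) hω
    (fun i => (hY i).le) eqY eqX eqXb
  have hk := key k
  have hωk := key (ω k)
  rw [hω, hℓω] at hωk
  rw [hsymm, tanh_eq_one_sub_exp_div, show -2 * ((h * ∑ j, L j) / 2) = -h * ∑ j, L j by ring,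
    one_div_div, div_mul_eq_mul_div, le_div_iff₀ (by linarith)]
  linear_combination hk + hωk

/-- Intermediate inequality in the proof of Theorem 2 (from
`cosh(h(S(k,i) − Λ/2)) ≤ cosh(hΛ/2)`):
`(1 + e^{-hℓ'ₖ})(Yₖ + Y_{ω(k)}) ≤ (1/tanh(hΛ/2)) Σᵢ e^{-hℓ'ᵢ}(Yᵢ + Y_{ω(i)})`. -/
theorem lim_system_tanh_intermediate_inequality
    (n : ℕ) [NeZero n] (hn : 1 ≤ n) (h : ℝ) (hh : 0 < h)
    (L ℓ' X Xb Y : ZMod (2 * n) → ℝ)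
    (ω : ZMod (2 * n) → ZMod (2 * n))
    (hL : ∀ k, 0 < L k)
    (hω : ∀ k, ω (ω k) = k) (hω' : ∀ k, ω k ≠ k)
    (hℓpos : ∀ k, 0 < ℓ' k) (hℓω : ∀ k, ℓ' (ω k) = ℓ' k)
    (hX : ∀ k, 0 < X k) (hXb : ∀ k, 0 < Xb k) (hY : ∀ k, 0 < Y k)
    (eqY : ∀ k, Y k = Real.exp (-h * L (ω k + 1)) * X (ω k + 1)
        + Real.exp (-h * L (ω k)) * Xb (ω k))
    (eqX : ∀ k, X k = Real.exp (-h * L (k + 1)) * X (k + 1)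
        + Real.exp (-h * ℓ' k) * Y k)
    (eqXb : ∀ k, Xb k = Real.exp (-h * L (k - 1)) * Xb (k - 1)
        + Real.exp (-h * ℓ' (k - 1)) * Y (k - 1)) :
    ∀ k : ZMod (2 * n),
      (1 + Real.exp (-h * ℓ' k)) * (Y k + Y (ω k)) ≤
        (1 / Real.tanh (h * (∑ j, L j) / 2)) *
          ∑ i, Real.exp (-h * ℓ' i) * (Y i + Y (ω i)) :=
  lim_system_tanh_intermediate_inequality_general n h hh L ℓ' X Xb Y ω hL hω hℓω hY eqY eqX eqXb
end

section
/- Under Lim's system hypotheses (see context), for every k ∈ ZMod(2n): (1 + exp(−h·ℓ'_k))·(Y_k + Y_{ω(k)}) ≥ (1/sinh(h·Λ/2)) · Σ_{i ∈ ZMod(2n)} exp(−h·ℓ'_i)·(Y_i + Y_{ω(i)}). -/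
/-! Unrolling `X k = a (k + 1) * X (k + 1) + b k` once around the cycle, with `a j = exp (-h * L j)`
and `b j = exp (-h * ℓ' j) * Y j`, gives `(1 - ∏ a) * X k = ∑ i, (∏ of a over (k, i]) * b i`;
unrolling `Xb` in the opposite direction gives the same with the arc `(i, k]`. Hence
`(1 - exp (-h * Λ)) * Y (ω k)` is a combination of the `b i` whose two weights, for `i ≠ k`, are
products of `a` over complementary arcs, so by AM–GM they add up to at least `2 * exp (-h * Λ / 2)`
(this is the paper's `cosh ≥ 1`). Adding the bounds at `k` and `ω k`, where
`b (ω k) = exp (-h * ℓ' k) * Y (ω k)`, and using `1 - exp (-2 * x) = 2 * exp (-x) * sinh x` gives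
the inequality. -/

open Finset

@[to_additive]
theorem ZMod.prod_range_eq_prod_val_sub {M : Type*} [CommMonoid M] {N : ℕ} [NeZero N]
    (g : ℕ → M) (k : ZMod N) : ∏ t ∈ range N, g t = ∏ i : ZMod N, g (i - k).val := by
  rw [Fintype.prod_equiv (Equiv.subRight k) (fun i => g (i - k).val) (fun i => g i.val)
    fun _ => rfl]
  refine (prod_nbij ZMod.val (fun i _ => mem_range.2 i.val_lt)
    (fun i _ j _ hij => ZMod.val_injective N hij) (fun t ht => ⟨t, mem_coe.2 (mem_univ _), ?_⟩)
    (fun _ _ => rfl)).symm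
  exact ZMod.val_cast_of_lt (mem_range.1 ht)

section ArcProduct

variable {R : Type*} [CommRing R] {N : ℕ}

def arcProd (a : ZMod N → R) (k : ZMod N) (m : ℕ) : R :=
  ∏ j ∈ range m, a (k + j + 1)

variable (a : ZMod N → R) (k : ZMod N)

@[simp]
theorem arcProd_zero : arcProd a k 0 = 1 := prod_range_zero _

theorem arcProd_succ (m : ℕ) : arcProd a k (m + 1) = arcProd a k m * a (k + m + 1) :=
  prod_range_succ _ _

theorem arcProd_succ' (m : ℕ) : arcProd a k (m + 1) = a (k + 1) * arcProd a (k + 1) m := by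
  rw [arcProd, prod_range_succ', mul_comm]
  simp only [arcProd, Nat.cast_zero, add_zero, Nat.cast_succ]
  congr 1
  exact prod_congr rfl fun j _ => by ring_nf

theorem arcProd_add (m m' : ℕ) :
    arcProd a k (m + m') = arcProd a k m * arcProd a (k + m) m' := by
  rw [arcProd, prod_range_add]
  simp only [arcProd, Nat.cast_add, add_assoc]

theorem arcProd_card [NeZero N] : arcProd a k N = ∏ i, a i := by
  rw [arcProd, ZMod.prod_range_eq_prod_val_sub _ (k + 1)]
  simp only [ZMod.natCast_zmod_val]
  exact prod_congr rfl fun i _ => by ring_nf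

theorem arcProd_comp_neg (m : ℕ) :
    arcProd (fun j => a (-j)) (-(k + 1)) m = arcProd a (k - m) m := by
  induction m with
  | zero => simp
  | succ m ih =>
    rw [arcProd_succ, ih, arcProd_succ', mul_comm]
    push_cast
    ring_nf

theorem arcProd_mul_arcProd_of_ne [NeZero N] {i : ZMod N} (hik : i ≠ k) :
    arcProd a k (i - k).val * arcProd a i (k - i).val = ∏ j, a j := by
  have hval : (i - k).val + (k - i).val = N := by
    rw [← neg_sub i k, ZMod.neg_val, if_neg (sub_ne_zero.2 hik)]
    have := (i - k).val_lt
    omega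
  have := arcProd_add a k (i - k).val (k - i).val
  rwa [hval, arcProd_card, ZMod.natCast_zmod_val, add_sub_cancel, eq_comm] at this

variable {a} {b x : ZMod N → R}

theorem eq_arcProd_mul_add_sum (hx : ∀ k, x k = a (k + 1) * x (k + 1) + b k) (m : ℕ) :
    x k = arcProd a k m * x (k + m) + ∑ t ∈ range m, arcProd a k t * b (k + t) := by
  induction m with
  | zero => simp
  | succ m ih =>
    rw [ih, hx (k + m), arcProd_succ, sum_range_succ, Nat.cast_succ, ← add_assoc k]
    ring

theorem one_sub_prod_mul_eq_sum [NeZero N] (hx : ∀ k, x k = a (k + 1) * x (k + 1) + b k) :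
    (1 - ∏ i, a i) * x k = ∑ i, arcProd a k (i - k).val * b i := by
  have hunroll := eq_arcProd_mul_add_sum k hx N
  rw [ZMod.natCast_self, add_zero, arcProd_card, ZMod.sum_range_eq_sum_val_sub _ k] at hunroll
  simp only [ZMod.natCast_zmod_val, add_sub_cancel] at hunroll
  linear_combination hunroll

theorem one_sub_prod_mul_eq_sum_of_pred [NeZero N]
    (hx : ∀ k, x k = a (k - 1) * x (k - 1) + b (k - 1)) :
    (1 - ∏ i, a i) * x (k + 1) = ∑ i, arcProd a i (k - i).val * b i := by
  have hrefl := one_sub_prod_mul_eq_sum (a := fun j => a (-j)) (b := fun j => b (-j - 1))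
    (x := fun j => x (-j)) (-(k + 1)) fun j => by simpa only [neg_add'] using hx (-j)
  rw [Fintype.prod_equiv (Equiv.neg _) (fun i => a (-i)) a fun _ => rfl, neg_neg] at hrefl
  rw [hrefl]
  refine Fintype.sum_bijective (fun i => -i - 1) ?_ _ _ fun i => ?_
  · exact (Equiv.neg _ |>.trans (Equiv.subRight 1)).bijective
  · rw [show k - (-i - 1) = i - -(k + 1) by ring, arcProd_comp_neg, ZMod.natCast_zmod_val]
    congr 2
    ring

end ArcProduct

theorem two_mul_le_add_of_mul_eq_sq {u v c : ℝ} (hu : 0 ≤ u) (hv : 0 ≤ v) (hc : 0 ≤ c)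
    (huv : u * v = c ^ 2) : 2 * c ≤ u + v := by
  refine (pow_le_pow_iff_left₀ (by positivity) (by positivity) two_ne_zero).1 ?_
  calc (2 * c) ^ 2 = 4 * u * v := by rw [mul_assoc, huv]; ring
    _ ≤ (u + v) ^ 2 := four_mul_le_sq_add u v

theorem arcProd_nonneg {N : ℕ} {a : ZMod N → ℝ} (ha : ∀ i, 0 ≤ a i) (k : ZMod N) (m : ℕ) :
    0 ≤ arcProd a k m :=
  prod_nonneg fun _ _ => ha _

theorem two_mul_sum_sub_le_one_sub_sq_mul {N : ℕ} [NeZero N] {a b X Xb : ZMod N → ℝ} {c : ℝ}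
    (ha : ∀ i, 0 ≤ a i) (hb : ∀ i, 0 ≤ b i) (hc : 0 ≤ c) (hca : c ^ 2 = ∏ i, a i)
    (hX : ∀ k, X k = a (k + 1) * X (k + 1) + b k)
    (hXb : ∀ k, Xb k = a (k - 1) * Xb (k - 1) + b (k - 1)) (k : ZMod N) :
    2 * c * ∑ i, b i - 2 * c * (1 - c) * b k ≤
      (1 - c ^ 2) * (a (k + 1) * X (k + 1) + a k * Xb k) := by
  set w := fun i => arcProd a k (i - k).val + arcProd a i (k - i).val
  have hident : (1 - c ^ 2) * (a (k + 1) * X (k + 1) + a k * Xb k + 2 * b k) =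
      ∑ i, w i * b i := by
    have hfwd := one_sub_prod_mul_eq_sum k hX
    have hbwd := one_sub_prod_mul_eq_sum_of_pred k hXb
    rw [hX k] at hfwd
    rw [hXb (k + 1), add_sub_cancel_right] at hbwd
    simp only [w, add_mul, sum_add_distrib, ← hfwd, ← hbwd, hca]
    ring
  have hoff : ∀ i ∈ univ.erase k, 2 * c * b i ≤ w i * b i := fun i hi =>
    mul_le_mul_of_nonneg_right (two_mul_le_add_of_mul_eq_sq (arcProd_nonneg ha _ _)
      (arcProd_nonneg ha _ _) hc ((arcProd_mul_arcProd_of_ne a k (ne_of_mem_erase hi)).trans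
        hca.symm)) (hb i)
  have hwk : w k = 2 := by simp only [w, sub_self, ZMod.val_zero, arcProd_zero]; norm_num
  rw [← add_sum_erase _ _ (mem_univ k), mul_add, mul_sum]
  rw [← add_sum_erase _ _ (mem_univ k), hwk] at hident
  linarith [sum_le_sum hoff]

theorem one_sub_exp_neg_sq (x : ℝ) : 1 - Real.exp (-x) ^ 2 = 2 * Real.exp (-x) * Real.sinh x := by
  have hinv : Real.exp (-x) * Real.exp x = 1 := by
    rw [← Real.exp_add, neg_add_cancel, Real.exp_zero]
  rw [Real.sinh_eq]
  linear_combination -hinv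

theorem one_div_mul_le_of_le_mul {s x y : ℝ} (hx : 0 ≤ x) (hy : 0 ≤ y) (h : y ≤ x * s) :
    1 / s * y ≤ x := by
  rcases le_or_gt s 0 with hs | hs
  · exact (mul_nonpos_of_nonpos_of_nonneg (one_div_nonpos.2 hs) hy).trans hx
  · rwa [one_div_mul_eq_div, div_le_iff₀ hs]

theorem two_mul_le_one_add_mul_add_mul_sinh {x q S u v : ℝ} (hq : 0 ≤ q) (hu : 0 ≤ u)
    (hv : 0 ≤ v)
    (hu' : 2 * Real.exp (-x) * S - 2 * Real.exp (-x) * (1 - Real.exp (-x)) * (q * u) ≤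
      (1 - Real.exp (-x) ^ 2) * v)
    (hv' : 2 * Real.exp (-x) * S - 2 * Real.exp (-x) * (1 - Real.exp (-x)) * (q * v) ≤
      (1 - Real.exp (-x) ^ 2) * u) :
    2 * S ≤ (1 + q) * (u + v) * Real.sinh x := by
  have hsq : 0 ≤ q * (u + v) * (1 - Real.exp (-x)) ^ 2 := by positivity
  refine le_of_mul_le_mul_left ?_ (by positivity : 0 < 2 * Real.exp (-x))
  linear_combination hu' + hv' + hsq + (1 + q) * (u + v) * one_sub_exp_neg_sq x

theorem lim_system_sinh_intermediate_inequality_general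
    (n : ℕ) [NeZero n] (h : ℝ)
    (L ℓ' X Xb Y : ZMod (2 * n) → ℝ)
    (ω : ZMod (2 * n) → ZMod (2 * n))
    (hω : ∀ k, ω (ω k) = k)
    (hℓω : ∀ k, ℓ' (ω k) = ℓ' k)
    (hY : ∀ k, 0 < Y k)
    (eqY : ∀ k, Y k = Real.exp (-h * L (ω k + 1)) * X (ω k + 1)
        + Real.exp (-h * L (ω k)) * Xb (ω k))
    (eqX : ∀ k, X k = Real.exp (-h * L (k + 1)) * X (k + 1)
        + Real.exp (-h * ℓ' k) * Y k)
    (eqXb : ∀ k, Xb k = Real.exp (-h * L (k - 1)) * Xb (k - 1)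
        + Real.exp (-h * ℓ' (k - 1)) * Y (k - 1)) :
    ∀ k : ZMod (2 * n),
      (1 + Real.exp (-h * ℓ' k)) * (Y k + Y (ω k)) ≥
        (1 / Real.sinh (h * (∑ j, L j) / 2)) *
          ∑ i, Real.exp (-h * ℓ' i) * (Y i + Y (ω i)) := by
  intro k
  have hb : ∀ i, 0 ≤ Real.exp (-h * ℓ' i) * Y i := fun i => (mul_pos (Real.exp_pos _) (hY i)).le
  have hc : Real.exp (-(h * (∑ j, L j) / 2)) ^ 2 = ∏ i, Real.exp (-h * L i) := by
    rw [← Real.exp_sum, ← Real.exp_nat_mul]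
    simp only [neg_mul, sum_neg_distrib, ← mul_sum]
    ring_nf
  have hbound := two_mul_sum_sub_le_one_sub_sq_mul (fun _ => (Real.exp_pos _).le) hb
    (Real.exp_pos _).le hc eqX eqXb
  have hk := hbound (ω (ω k))
  have hωk := hbound (ω k)
  rw [← eqY (ω k), hω] at hk
  rw [← eqY k, hℓω] at hωk
  have hsym : ∑ i, Real.exp (-h * ℓ' i) * (Y i + Y (ω i)) =
      2 * ∑ i, Real.exp (-h * ℓ' i) * Y i := by
    have hperm : ∑ i, Real.exp (-h * ℓ' i) * Y (ω i) = ∑ i, Real.exp (-h * ℓ' i) * Y i :=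
      Fintype.sum_bijective ω (Function.Involutive.bijective hω) _ _ fun i => by rw [hℓω]
    simp only [mul_add, sum_add_distrib, hperm]
    ring
  rw [hsym, ge_iff_le]
  have hYk := hY k
  have hYωk := hY (ω k)
  exact one_div_mul_le_of_le_mul (by positivity)
    (mul_nonneg zero_le_two (sum_nonneg fun i _ => hb i))
    (two_mul_le_one_add_mul_add_mul_sinh (Real.exp_pos _).le hYk.le hYωk.le hk hωk)

/-- Intermediate inequality in the proof of Theorem 2 (from
`cosh(h(S(k,i) − Λ/2)) ≥ 1`):
`(1 + e^{-hℓ'ₖ})(Yₖ + Y_{ω(k)}) ≥ (1/sinh(hΛ/2)) Σᵢ e^{-hℓ'ᵢ}(Yᵢ + Y_{ω(i)})`. -/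
theorem lim_system_sinh_intermediate_inequality
    (n : ℕ) [NeZero n] (hn : 1 ≤ n) (h : ℝ) (hh : 0 < h)
    (L ℓ' X Xb Y : ZMod (2 * n) → ℝ)
    (ω : ZMod (2 * n) → ZMod (2 * n))
    (hL : ∀ k, 0 < L k)
    (hω : ∀ k, ω (ω k) = k) (hω' : ∀ k, ω k ≠ k)
    (hℓpos : ∀ k, 0 < ℓ' k) (hℓω : ∀ k, ℓ' (ω k) = ℓ' k)
    (hX : ∀ k, 0 < X k) (hXb : ∀ k, 0 < Xb k) (hY : ∀ k, 0 < Y k)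
    (eqY : ∀ k, Y k = Real.exp (-h * L (ω k + 1)) * X (ω k + 1)
        + Real.exp (-h * L (ω k)) * Xb (ω k))
    (eqX : ∀ k, X k = Real.exp (-h * L (k + 1)) * X (k + 1)
        + Real.exp (-h * ℓ' k) * Y k)
    (eqXb : ∀ k, Xb k = Real.exp (-h * L (k - 1)) * Xb (k - 1)
        + Real.exp (-h * ℓ' (k - 1)) * Y (k - 1)) :
    ∀ k : ZMod (2 * n),
      (1 + Real.exp (-h * ℓ' k)) * (Y k + Y (ω k)) ≥
        (1 / Real.sinh (h * (∑ j, L j) / 2)) *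
          ∑ i, Real.exp (-h * ℓ' i) * (Y i + Y (ω i)) :=
  lim_system_sinh_intermediate_inequality_general n h L ℓ' X Xb Y ω hω hℓω hY eqY eqX eqXb
end

section
/- Combinatorial claim of Remark 'notsharp': let N ≥ 1 be an integer and L : ZMod(N) → ℝ with L_j > 0 for all j, and set Λ := Σ_{j ∈ ZMod(N)} L_j. For k, i ∈ ZMod(N) define the cyclic partial sum S(k,i) := Σ_{t=1}^{d} L_{k+t}, where d is the unique integer in {0, 1, …, N−1} with i = k + d in ZMod(N) (so S(k,k) = 0). For each i ∈ ZMod(N) let C(i) be the number of k ∈ ZMod(N) such that S(k,i) < Λ/4 or S(k,i) > 3Λ/4. Then the number of i ∈ ZMod(N) with 4·C(i) ≥ N is at least N/2, i.e. 2·#{ i ∈ ZMod(N) : 4·C(i) ≥ N } ≥ N. -/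
/-!
Put the vertices on a circle of length `Λ = ∑ j, L j`: `cyclicSum L k i` is the length of the
arc from `k` forward to `i`, and `IsNear L k i` says that `k` and `i` are at circular distance
less than `Λ / 4`. If both `i` and the antipodal index `j = i + ⌊N/2⌋` had fewer than `N / 4`
near vertices, more than `N / 2` vertices would be at distance at least `Λ / 4` from both.
Such a vertex on the arc from `i` to `j` forces this arc to have length at least `Λ / 2`, with
equality only for the single vertex at distance exactly `Λ / 4` from `i`. So these vertices all
lie strictly inside one of the two arcs, which hold fewer than `N / 2` vertices each, or there
are at most two of them. Hence `i ↦ i + ⌊N/2⌋` maps the bad indices injectively to good ones.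
-/
open Finset

namespace ArcSums

theorem card_le_two_mul_card_filter_of_injective {α : Type*} [Fintype α] {p : α → Prop}
    [DecidablePred p] {f : α → α} (hf : f.Injective) (h : ∀ x, ¬p x → p (f x)) :
    Fintype.card α ≤ 2 * #{x | p x} := by
  have hinj : #{x | ¬p x} ≤ #{x | p x} :=
    card_le_card_of_injOn f (fun x hx => by simpa using h x (by simpa using hx)) hf.injOn
  have hsplit : #{x | p x} + #{x | ¬p x} = Fintype.card α := card_filter_add_card_filter_not _
  omega

section Sums

variable {M : Type*} [AddCommMonoid M]

theorem sum_Icc_one_eq_sum_range (f : ℕ → M) (d : ℕ) :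
    ∑ t ∈ Icc 1 d, f t = ∑ t ∈ range d, f (t + 1) := by
  rw [range_eq_Ico, sum_Ico_add' f 0 d 1, zero_add, Ico_add_one_right_eq_Icc]

theorem sum_Icc_one_add (f : ℕ → M) (a b : ℕ) :
    ∑ t ∈ Icc 1 (a + b), f t = ∑ t ∈ Icc 1 a, f t + ∑ t ∈ Icc 1 b, f (a + t) := by
  simp only [sum_Icc_one_eq_sum_range, sum_range_add, add_assoc]

variable {N : ℕ} [NeZero N]

theorem sum_range_natCast (g : ZMod N → M) : ∑ t ∈ range N, g t = ∑ x, g x :=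
  sum_nbij' (↑) ZMod.val (fun _ _ => mem_univ _) (fun x _ => mem_range.2 (ZMod.val_lt x))
    (fun _ ht => ZMod.val_cast_of_lt (mem_range.1 ht)) (fun x _ => ZMod.natCast_zmod_val x)
    (fun _ _ => rfl)

theorem sum_Icc_one_period (g : ZMod N → M) (k : ZMod N) :
    ∑ t ∈ Icc 1 N, g (k + t) = ∑ x, g x := by
  rw [sum_Icc_one_eq_sum_range]
  push_cast
  rw [sum_range_natCast (fun x => g (k + (x + 1)))]
  exact Fintype.sum_equiv (Equiv.addRight 1 |>.trans (Equiv.addLeft k)) _ _ fun _ => rfl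

end Sums

section ZModVal

variable {N : ℕ} [NeZero N] {a b c : ZMod N}

theorem val_sub_add_val_sub (h : (b - a).val ≤ (c - a).val) :
    (b - a).val + (c - b).val = (c - a).val := by
  have hsum : c - a = (b - a) + (c - b) := by ring
  rw [hsum, ZMod.val_add_of_lt]
  by_contra hN
  rw [hsum, ZMod.val_add_of_le (not_lt.1 hN)] at h
  have := ZMod.val_lt (c - b)
  omega

theorem val_sub_add_val_sub_rev (h : b ≠ a) : (b - a).val + (a - b).val = N := by
  have hne : b - a ≠ 0 := sub_ne_zero.2 h
  rw [show a - b = -(b - a) by ring, ZMod.neg_val, if_neg hne]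
  have := ZMod.val_lt (b - a)
  omega

theorem val_sub_le_or_val_sub_le (h : a ≠ b) :
    (c - a).val ≤ (b - a).val ∨ (c - b).val ≤ (a - b).val := by
  refine (le_or_gt (c - a).val (b - a).val).imp id fun hlt => ?_
  have h1 := val_sub_add_val_sub_rev h.symm
  have h2 := val_sub_add_val_sub (a := a) (b := b) (c := c) hlt.le
  have := ZMod.val_lt (c - a)
  omega

end ZModVal

variable {N : ℕ} (L : ZMod N → ℝ)

def cyclicSum (k i : ZMod N) : ℝ :=
  ∑ t ∈ Icc 1 (i - k).val, L (k + (t : ZMod N))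

@[simp]
theorem cyclicSum_self (k : ZMod N) : cyclicSum L k k = 0 := by
  simp [cyclicSum]

theorem cyclicSum_pos (hL : ∀ j, 0 < L j) {k i : ZMod N} (h : k ≠ i) :
    0 < cyclicSum L k i := by
  have hval : (i - k).val ≠ 0 := by simpa [ZMod.val_eq_zero, sub_eq_zero] using h.symm
  exact sum_pos (fun _ _ => hL _) ⟨1, mem_Icc.2 ⟨le_rfl, Nat.one_le_iff_ne_zero.2 hval⟩⟩

variable [NeZero N]

theorem sum_Icc_one_eq_cyclicSum_add {i k j : ZMod N} {n : ℕ}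
    (h : (k - i).val + (j - k).val = n) :
    ∑ t ∈ Icc 1 n, L (i + (t : ZMod N)) = cyclicSum L i k + cyclicSum L k j := by
  rw [← h, sum_Icc_one_add, cyclicSum, cyclicSum]
  congr 1
  refine sum_congr rfl fun t _ => ?_
  push_cast
  rw [ZMod.natCast_zmod_val]
  ring_nf

theorem cyclicSum_add {i k j : ZMod N} (h : (k - i).val ≤ (j - i).val) :
    cyclicSum L i j = cyclicSum L i k + cyclicSum L k j :=
  sum_Icc_one_eq_cyclicSum_add L (val_sub_add_val_sub h)

theorem cyclicSum_add_cyclicSum {i k : ZMod N} (h : k ≠ i) :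
    cyclicSum L i k + cyclicSum L k i = ∑ j, L j := by
  rw [← sum_Icc_one_eq_cyclicSum_add L (val_sub_add_val_sub_rev h), sum_Icc_one_period]

theorem cyclicSum_injective (hL : ∀ j, 0 < L j) (i : ZMod N) :
    Function.Injective (cyclicSum L i) := by
  intro k k' hkk'
  by_contra hne
  rcases le_total (k - i).val (k' - i).val with h | h
  · linarith [cyclicSum_add L h, cyclicSum_pos L hL hne]
  · linarith [cyclicSum_add L h, cyclicSum_pos L hL (Ne.symm hne)]

-- An `abbrev`, so that filtering by it uses the same `Decidable` instance as the statement.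
abbrev IsNear (k i : ZMod N) : Prop :=
  cyclicSum L k i < (∑ j, L j) / 4 ∨ 3 * (∑ j, L j) / 4 < cyclicSum L k i

noncomputable def nearCount (i : ZMod N) : ℕ := #{k | IsNear L k i}

theorem isNear_self (hL : ∀ j, 0 < L j) (i : ZMod N) : IsNear L i i := by
  have : 0 < ∑ j, L j := sum_pos (fun j _ => hL j) univ_nonempty
  left
  rw [cyclicSum_self]
  positivity

theorem one_le_nearCount (hL : ∀ j, 0 < L j) (i : ZMod N) : 1 ≤ nearCount L i :=
  card_pos.2 ⟨i, mem_filter.2 ⟨mem_univ i, isNear_self L hL i⟩⟩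

theorem isNear_comm (k i : ZMod N) : IsNear L k i ↔ IsNear L i k := by
  rcases eq_or_ne k i with rfl | h
  · rfl
  · have := cyclicSum_add_cyclicSum L h
    constructor <;> rintro (h' | h') <;> [right; left; right; left] <;> linarith

noncomputable def farArc (i j : ZMod N) : Finset (ZMod N) :=
  {k | ¬IsNear L k i ∧ ¬IsNear L k j ∧ (k - i).val ≤ (j - i).val}

theorem cyclicSum_split_of_mem_farArc {i j k : ZMod N} (hk : k ∈ farArc L i j) :
    (∑ j, L j) / 4 ≤ cyclicSum L i k ∧ (∑ j, L j) / 4 ≤ cyclicSum L k j ∧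
      cyclicSum L i j = cyclicSum L i k + cyclicSum L k j := by
  obtain ⟨-, hki, hkj, hle⟩ := mem_filter.1 hk
  rw [isNear_comm] at hki
  simp only [not_or, not_lt] at hki hkj
  exact ⟨hki.1, hkj.1, cyclicSum_add L hle⟩

theorem farArc_eq_empty {i j : ZMod N} (h : cyclicSum L i j < (∑ j, L j) / 2) :
    farArc L i j = ∅ := by
  refine eq_empty_of_forall_notMem fun k hk => ?_
  obtain ⟨h1, h2, h3⟩ := cyclicSum_split_of_mem_farArc L hk
  linarith

theorem card_farArc_le_one (hL : ∀ j, 0 < L j) {i j : ZMod N}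
    (h : cyclicSum L i j = (∑ j, L j) / 2) : #(farArc L i j) ≤ 1 := by
  have quarter : ∀ k ∈ farArc L i j, cyclicSum L i k = (∑ j, L j) / 4 := fun k hk => by
    obtain ⟨h1, h2, h3⟩ := cyclicSum_split_of_mem_farArc L hk
    linarith
  exact card_le_one.2 fun a ha b hb =>
    cyclicSum_injective L hL i ((quarter a ha).trans (quarter b hb).symm)

theorem card_farArc_le (hL : ∀ j, 0 < L j) (i j : ZMod N) :
    #(farArc L i j) ≤ (j - i).val - 1 := by
  have hmaps : ∀ k ∈ farArc L i j, (k - i).val ∈ Ioo 0 (j - i).val := fun k hk => by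
    obtain ⟨-, hfar_i, hfar_j, hle⟩ := mem_filter.1 hk
    have hki : k ≠ i := fun e => hfar_i (e ▸ isNear_self L hL k)
    have hkj : k ≠ j := fun e => hfar_j (e ▸ isNear_self L hL k)
    have hpos : (k - i).val ≠ 0 := by rwa [ZMod.val_ne_zero, sub_ne_zero]
    have hne : (k - i).val ≠ (j - i).val := fun e =>
      hkj (sub_left_injective (ZMod.val_injective N e))
    exact mem_Ioo.2 ⟨Nat.pos_of_ne_zero hpos, lt_of_le_of_ne hle hne⟩
  calc #(farArc L i j) ≤ #(Ioo 0 (j - i).val) :=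
        card_le_card_of_injOn _ hmaps fun _ _ _ _ hab =>
          sub_left_injective (ZMod.val_injective N hab)
    _ = (j - i).val - 1 := by simp

theorem card_le_nearCount_add_card_farArc {i j : ZMod N} (hij : i ≠ j) :
    N ≤ nearCount L i + nearCount L j + #(farArc L i j) + #(farArc L j i) := by
  have cover : univ ⊆ ({k | IsNear L k i} : Finset (ZMod N)) ∪
      ({k | IsNear L k j} : Finset (ZMod N)) ∪ farArc L i j ∪ farArc L j i := by
    intro k _
    simp only [farArc, mem_union, mem_filter, mem_univ, true_and]
    by_cases hi : IsNear L k i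
    · tauto
    by_cases hj : IsNear L k j
    · tauto
    rcases val_sub_le_or_val_sub_le (c := k) hij with h | h <;> tauto
  calc N = #(univ : Finset (ZMod N)) := (ZMod.card N).symm
    _ ≤ _ := card_le_card cover
    _ ≤ _ := card_union_le _ _
    _ ≤ _ := Nat.add_le_add_right (card_union_le _ _) _
    _ ≤ _ := Nat.add_le_add_right (Nat.add_le_add_right (card_union_le _ _) _) _

theorem le_four_mul_nearCount_add_half (hL : ∀ j, 0 < L j) {i : ZMod N}
    (hi : 4 * nearCount L i < N) : N ≤ 4 * nearCount L (i + (N / 2 : ℕ)) := by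
  set j := i + ((N / 2 : ℕ) : ZMod N)
  have hN : 4 < N := by linarith [one_le_nearCount L hL i]
  have hji : (j - i).val = N / 2 := by
    rw [add_sub_cancel_left, ZMod.val_cast_of_lt (by omega)]
  have hne : j ≠ i := fun e => by rw [e, sub_self, ZMod.val_zero] at hji; omega
  have hij : (i - j).val = N - N / 2 := by have := val_sub_add_val_sub_rev hne; omega
  have hcover := card_le_nearCount_add_card_farArc L hne.symm
  have hsum := cyclicSum_add_cyclicSum L hne
  have hij_le := card_farArc_le L hL i j
  have hji_le := card_farArc_le L hL j i
  by_contra hbad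
  rcases lt_trichotomy (cyclicSum L i j) ((∑ j, L j) / 2) with h | h | h
  · rw [farArc_eq_empty L h, card_empty] at hcover
    omega
  · have := card_farArc_le_one L hL h
    have := card_farArc_le_one L hL (j := i) (i := j) (by linarith)
    omega
  · rw [farArc_eq_empty L (i := j) (j := i) (by linarith), card_empty] at hcover
    omega

end ArcSums

open ArcSums

theorem remark_notsharp_combinatorial_claim_general
    (N : ℕ) [NeZero N]
    (L : ZMod N → ℝ) (hL : ∀ j, 0 < L j) :
    2 * (Finset.univ.filter (fun i : ZMod N =>
        N ≤ 4 * (Finset.univ.filter (fun k : ZMod N =>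
          (∑ t ∈ Finset.Icc 1 (i - k).val, L (k + (t : ZMod N)))
              < (∑ j, L j) / 4 ∨
            3 * (∑ j, L j) / 4
              < ∑ t ∈ Finset.Icc 1 (i - k).val, L (k + (t : ZMod N)))).card)).card
      ≥ N := by
  have := card_le_two_mul_card_filter_of_injective (p := fun i => N ≤ 4 * nearCount L i)
    (add_left_injective ((N / 2 : ℕ) : ZMod N))
    fun i hi => le_four_mul_nearCount_add_half L hL (not_le.1 hi)
  rwa [ZMod.card] at this

/-- Combinatorial claim of Remark `notsharp`: with cyclic partial sums
`S(k,i) = Σ_{t=1}^{d} L_{k+t}` (where `d = (i−k).val ∈ {0,…,N−1}`) and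
`C(i) = #{k : S(k,i) < Λ/4 or S(k,i) > 3Λ/4}`, at least half of the
indices `i` satisfy `4·C(i) ≥ N`. -/
theorem remark_notsharp_combinatorial_claim
    (N : ℕ) [NeZero N] (hN : 1 ≤ N)
    (L : ZMod N → ℝ) (hL : ∀ j, 0 < L j) :
    2 * (Finset.univ.filter (fun i : ZMod N =>
        N ≤ 4 * (Finset.univ.filter (fun k : ZMod N =>
          (∑ t ∈ Finset.Icc 1 (i - k).val, L (k + (t : ZMod N)))
              < (∑ j, L j) / 4 ∨
            3 * (∑ j, L j) / 4
              < ∑ t ∈ Finset.Icc 1 (i - k).val, L (k + (t : ZMod N)))).card)).card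
      ≥ N :=
  remark_notsharp_combinatorial_claim_general N L hL
end
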